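/- For a 2×2 complex matrix A with eigenvalues λ₁, λ₂ and real scalars a, b ∈ ℝ, the ratio E_A : |D_A| = |λ₁ - conj(λ₂)|² : |λ₁ - λ₂|² is invariant under the transformations A ↦ aA (a ≠ 0), A ↦ A + bI, and A ↦ A⁻¹ (when A is invertible). -/

import Mathlib

open Matrix

noncomputable def DA (A : Matrix (Fin 2) (Fin 2) ℂ) : ℂ :=
  A.det - (Matrix.trace A) ^ 2 / 4

noncomputable def EA (A : Matrix (Fin 2) (Fin 2) ℂ) : ℝ :=
  ((Matrix.trace A).im / 2) ^ 2 + (‖DA A‖ - (DA A).re) / 2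

/-!
In terms of the eigenvalues, `‖D_A‖ = |λ₁ - λ₂|² / 4` and `E_A = |λ₁ - conj λ₂|² / 4`.
The maps `z ↦ a z`, `z ↦ z + b` and `z ↦ z⁻¹` are Möbius maps with real coefficients: they
act on the eigenvalues, commute with conjugation, and multiply `|z - w|` and `|z - conj w|` by
the same factor (`|a|`, `1` and `1 / (|z| |w|)` respectively), so the ratio does not change.
-/

theorem Matrix.trace_inv_fin_two {K : Type*} [Field K] (B : Matrix (Fin 2) (Fin 2) K) :
    B⁻¹.trace = B.trace / B.det := by
  rw [inv_def, trace_smul, adjugate_fin_two, Ring.inverse_eq_inv', trace_fin_two, trace_fin_two]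
  simp only [of_apply, cons_val', cons_val_zero, cons_val_one, empty_val', cons_val_fin_one,
    smul_eq_mul, div_eq_inv_mul, add_comm]

/-- By Vieta, `μ₁, μ₂` are the roots of `t² - tr B • t + det B`: the eigenvalues of `B`
with multiplicity. -/
structure IsEigenvaluePair {R : Type*} [CommRing R] (B : Matrix (Fin 2) (Fin 2) R) (μ₁ μ₂ : R) :
    Prop where
  add_eq_trace : μ₁ + μ₂ = B.trace
  mul_eq_det : μ₁ * μ₂ = B.det

namespace IsEigenvaluePair

section CommRing

variable {R : Type*} [CommRing R] {B : Matrix (Fin 2) (Fin 2) R} {μ₁ μ₂ : R}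

theorem smul (h : IsEigenvaluePair B μ₁ μ₂) (c : R) :
    IsEigenvaluePair (c • B) (c * μ₁) (c * μ₂) where
  add_eq_trace := by rw [trace_smul, ← h.add_eq_trace, smul_eq_mul, mul_add]
  mul_eq_det := by
    rw [det_smul, ← h.mul_eq_det, Fintype.card_fin]
    ring

theorem add_smul_one (h : IsEigenvaluePair B μ₁ μ₂) (c : R) :
    IsEigenvaluePair (B + c • 1) (μ₁ + c) (μ₂ + c) where
  add_eq_trace := by
    rw [trace_add, trace_smul, trace_one, ← h.add_eq_trace, Fintype.card_fin]
    simp only [Nat.cast_ofNat, smul_eq_mul]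
    ring
  mul_eq_det := by
    have hsum := h.add_eq_trace
    have hprod := h.mul_eq_det
    rw [trace_fin_two] at hsum
    rw [det_fin_two] at hprod ⊢
    simp only [Matrix.add_apply, Matrix.smul_apply, one_apply_eq, one_apply_ne zero_ne_one,
      one_apply_ne one_ne_zero, smul_eq_mul, mul_zero, mul_one, add_zero]
    linear_combination hprod + c * hsum

end CommRing

theorem inv {K : Type*} [Field K] {B : Matrix (Fin 2) (Fin 2) K} {μ₁ μ₂ : K}
    (h : IsEigenvaluePair B μ₁ μ₂) (hB : B.det ≠ 0) : IsEigenvaluePair B⁻¹ μ₁⁻¹ μ₂⁻¹ where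
  add_eq_trace := by
    have hμ : μ₁ * μ₂ ≠ 0 := h.mul_eq_det ▸ hB
    rw [trace_inv_fin_two, ← h.add_eq_trace, ← h.mul_eq_det]
    field_simp [left_ne_zero_of_mul hμ, right_ne_zero_of_mul hμ]
    ring
  mul_eq_det := by rw [det_nonsing_inv, Ring.inverse_eq_inv', ← h.mul_eq_det, mul_inv]

variable {B : Matrix (Fin 2) (Fin 2) ℂ} {μ₁ μ₂ : ℂ}

theorem DA_eq (h : IsEigenvaluePair B μ₁ μ₂) : DA B = -(μ₁ - μ₂) ^ 2 / 4 := by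
  rw [DA, ← h.add_eq_trace, ← h.mul_eq_det]
  ring

theorem norm_DA_eq (h : IsEigenvaluePair B μ₁ μ₂) : ‖DA B‖ = dist μ₁ μ₂ ^ 2 / 4 := by
  rw [h.DA_eq, norm_div, norm_neg, norm_pow, dist_eq_norm]
  norm_num

theorem EA_eq (h : IsEigenvaluePair B μ₁ μ₂) :
    EA B = dist μ₁ (starRingEnd ℂ μ₂) ^ 2 / 4 := by
  rw [EA, h.norm_DA_eq, h.DA_eq, ← h.add_eq_trace, dist_eq_norm, dist_eq_norm,
    Complex.sq_norm, Complex.sq_norm]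
  simp only [Complex.normSq_apply, Complex.add_im, Complex.sub_re, Complex.sub_im,
    Complex.div_ofNat_re, Complex.neg_re, Complex.mul_re, Complex.conj_re, Complex.conj_im,
    neg_sub, sub_neg_eq_add, pow_two]
  ring

theorem EA_mul_norm_DA_eq_of_dist_eq_mul {B' : Matrix (Fin 2) (Fin 2) ℂ} {ν₁ ν₂ : ℂ}
    (h : IsEigenvaluePair B μ₁ μ₂) (h' : IsEigenvaluePair B' ν₁ ν₂) (c : ℝ)
    (hdist : dist ν₁ ν₂ = c * dist μ₁ μ₂)
    (hdist_conj : dist ν₁ (starRingEnd ℂ ν₂) = c * dist μ₁ (starRingEnd ℂ μ₂)) :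
    EA B' * ‖DA B‖ = EA B * ‖DA B'‖ := by
  rw [h.EA_eq, h'.EA_eq, h.norm_DA_eq, h'.norm_DA_eq, hdist, hdist_conj]
  ring

end IsEigenvaluePair

theorem EA_DA_ratio_real_moebius_invariance_general (A : Matrix (Fin 2) (Fin 2) ℂ)
    (lam₁ lam₂ : ℂ) (hsum : lam₁ + lam₂ = Matrix.trace A) (hprod : lam₁ * lam₂ = A.det)
    (a b : ℝ) (hA : IsUnit A.det) :
    (EA A * (‖lam₁ - lam₂‖) ^ 2
        = ‖DA A‖ * (‖lam₁ - starRingEnd ℂ lam₂‖) ^ 2) ∧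
    (EA ((a : ℂ) • A) * ‖DA A‖ = EA A * ‖DA ((a : ℂ) • A)‖) ∧
    (EA (A + (b : ℂ) • (1 : Matrix (Fin 2) (Fin 2) ℂ)) * ‖DA A‖
        = EA A * ‖DA (A + (b : ℂ) • (1 : Matrix (Fin 2) (Fin 2) ℂ))‖) ∧
    (EA A⁻¹ * ‖DA A‖ = EA A * ‖DA A⁻¹‖) := by
  have h : IsEigenvaluePair A lam₁ lam₂ := ⟨hsum, hprod⟩
  have hlam : lam₁ * lam₂ ≠ 0 := hprod ▸ hA.ne_zero
  have hlam₁ := left_ne_zero_of_mul hlam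
  have hlam₂ := right_ne_zero_of_mul hlam
  refine ⟨?_, ?_, ?_, ?_⟩
  · rw [h.EA_eq, h.norm_DA_eq, dist_eq_norm, dist_eq_norm]
    ring
  · refine h.EA_mul_norm_DA_eq_of_dist_eq_mul (h.smul a) ‖(a : ℂ)‖ ?_ ?_
    · rw [dist_eq_norm, dist_eq_norm, ← mul_sub, norm_mul]
    · rw [map_mul, Complex.conj_ofReal, dist_eq_norm, dist_eq_norm, ← mul_sub, norm_mul]
  · refine h.EA_mul_norm_DA_eq_of_dist_eq_mul (h.add_smul_one b) 1 ?_ ?_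
    · rw [dist_add_right, one_mul]
    · rw [map_add, Complex.conj_ofReal, dist_add_right, one_mul]
  · refine h.EA_mul_norm_DA_eq_of_dist_eq_mul (h.inv hA.ne_zero) (‖lam₁‖ * ‖lam₂‖)⁻¹ ?_ ?_
    · rw [dist_inv_inv₀ hlam₁ hlam₂, div_eq_inv_mul]
    · rw [map_inv₀, dist_inv_inv₀ hlam₁ ((map_ne_zero _).mpr hlam₂), Complex.norm_conj,
        div_eq_inv_mul]

/-- The ratio `E_A : |D_A| = |λ₁ - conj λ₂|² : |λ₁ - λ₂|²` is invariant under
`A ↦ aA` (`a` real, `a ≠ 0`), `A ↦ A + bI` (`b` real), and `A ↦ A⁻¹`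
(when `A` is invertible).  Ratio equalities are expressed by cross-multiplication. -/
theorem EA_DA_ratio_real_moebius_invariance (A : Matrix (Fin 2) (Fin 2) ℂ)
    (lam₁ lam₂ : ℂ) (hsum : lam₁ + lam₂ = Matrix.trace A) (hprod : lam₁ * lam₂ = A.det)
    (a b : ℝ) (ha : a ≠ 0) (hA : IsUnit A.det) :
    (EA A * (‖lam₁ - lam₂‖) ^ 2
        = ‖DA A‖ * (‖lam₁ - starRingEnd ℂ lam₂‖) ^ 2) ∧
    (EA ((a : ℂ) • A) * ‖DA A‖ = EA A * ‖DA ((a : ℂ) • A)‖) ∧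
    (EA (A + (b : ℂ) • (1 : Matrix (Fin 2) (Fin 2) ℂ)) * ‖DA A‖
        = EA A * ‖DA (A + (b : ℂ) • (1 : Matrix (Fin 2) (Fin 2) ℂ))‖) ∧
    (EA A⁻¹ * ‖DA A‖ = EA A * ‖DA A⁻¹‖) :=
  EA_DA_ratio_real_moebius_invariance_general A lam₁ lam₂ hsum hprod a b hA
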